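/- For the truncated Hamiltonian 𝓗_{2R}(x,z) = ∑_{k≤d−1} x_k Ĥ^k_{2R}(z) + x^{−d} Ĥ^d_{2R}(z) built from the truncated feedback a*_{2R}, and the distance functions ρ_i(x) = x_i for i ≤ d−1 and ρ_d(x) = x^{−d}/√(d−1), the inequality ⟨D_z 𝓗_{2R}(x,z), Dρ_i(x)⟩ ≥ −2R(d−1) ρ_i(x) holds for every i ∈ {1,…,d}, every x in the interior of Ŝ_d, and every z ∈ R^{d−1}. -/
import Mathlib


noncomputable section

/-- The truncated feedback `a*_{2R}(r) = min(max(r,0), 2R)`. -/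
def astar2R (R r : ℝ) : ℝ := min (max r 0) (2 * R)

/-- The partial derivative `∂_{z_j}𝓗_{2R}(x,z)` of the truncated Hamiltonian
(explicit formula, with `x^{−d} = 1 − ∑_l x_l`). -/
def dzHam2R (n : ℕ) (R : ℝ) (x z : Fin n → ℝ) (j : Fin n) : ℝ :=
  (∑ k, (x k * astar2R R (z k - z j) - x j * astar2R R (z j - z k)))
    + (1 - ∑ l, x l) * astar2R R (-(z j)) - x j * astar2R R (z j)

lemma astar2R_nonneg (R r : ℝ) (hR : 0 < R) : 0 ≤ astar2R R r :=
  le_min (le_max_right _ _) (by linarith)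

lemma astar2R_le (R r : ℝ) : astar2R R r ≤ 2 * R := min_le_right _ _

lemma astar2R_key (R a b r : ℝ) (hR : 0 < R) (ha : 0 ≤ a) (hb : 0 ≤ b) :
    -(2 * R) * b ≤ a * astar2R R r - b * astar2R R (-r) := by
  rcases le_total r 0 with h | h
  · have h1 : astar2R R r = 0 := by
      unfold astar2R; rw [max_eq_right h, min_eq_left (by linarith)]
    have h2 : astar2R R (-r) ≤ 2 * R := astar2R_le R _
    have h3 : 0 ≤ astar2R R (-r) := astar2R_nonneg R _ hR
    nlinarith
  · have h1 : astar2R R (-r) = 0 := by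
      unfold astar2R; rw [max_eq_right (by linarith), min_eq_left (by linarith)]
    have h3 : 0 ≤ astar2R R r := astar2R_nonneg R _ hR
    nlinarith

/-- for the truncated Hamiltonian `𝓗_{2R}` and the distance functions
`ρ_i(x) = x_i` (`i ≤ d−1`) and `ρ_d(x) = x^{−d}/√(d−1)`, one has
`⟨D_z𝓗_{2R}(x,z), Dρ_i(x)⟩ ≥ −2R(d−1)ρ_i(x)` for every `i ∈ {1,…,d}`, every `x` in the
interior of `Ŝ_d`, and every `z ∈ ℝ^{d−1}`.  Here `n = d−1 ≥ 1`; for `i ≤ d−1` the inner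
product is `∂_{z_i}𝓗_{2R}`, and for `i = d` it is `∑_j ∂_{z_j}𝓗_{2R} · (−1/√(d−1))`. -/
theorem ham_derivative_boundary_inequality
    (n : ℕ) (hn : 1 ≤ n) (R : ℝ) (hR : 0 < R)
    (x z : Fin n → ℝ) (hx : ∀ i, 0 < x i) (hxs : ∑ i, x i < 1) :
    (∀ i : Fin n, -(2 * R * (n : ℝ)) * x i ≤ dzHam2R n R x z i)
    ∧ -(2 * R * (n : ℝ)) * ((1 - ∑ l, x l) / Real.sqrt n)
        ≤ ∑ j, dzHam2R n R x z j * (-(1 / Real.sqrt n)) := by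
  have hS : 0 < 1 - ∑ l, x l := by linarith
  constructor
  · intro j
    unfold dzHam2R
    have hfj : x j * astar2R R (z j - z j) - x j * astar2R R (z j - z j) = 0 := sub_self _
    have hsplit :
        (∑ k, (x k * astar2R R (z k - z j) - x j * astar2R R (z j - z k)))
          = ∑ k ∈ Finset.univ.erase j,
              (x k * astar2R R (z k - z j) - x j * astar2R R (z j - z k)) := by
      rw [← Finset.sum_erase_add _ _ (Finset.mem_univ j), hfj, add_zero]
    have hcard : ((Finset.univ.erase j).card : ℝ) = (n : ℝ) - 1 := by
      rw [Finset.card_erase_of_mem (Finset.mem_univ j)]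
      simp [Nat.cast_sub hn]
    have hlow : ((Finset.univ.erase j).card : ℝ) * (-(2 * R) * x j)
        ≤ ∑ k ∈ Finset.univ.erase j,
            (x k * astar2R R (z k - z j) - x j * astar2R R (z j - z k)) := by
      have := Finset.card_nsmul_le_sum (Finset.univ.erase j)
        (fun k => x k * astar2R R (z k - z j) - x j * astar2R R (z j - z k))
        (-(2 * R) * x j)
        (fun k _ => by
          have h := astar2R_key R (x k) (x j) (z k - z j) hR (hx k).le (hx j).le
          rwa [neg_sub] at h)
      simpa [nsmul_eq_mul, neg_sub] using this
    have htail : -(2 * R) * x j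
        ≤ (1 - ∑ l, x l) * astar2R R (-(z j)) - x j * astar2R R (z j) := by
      have := astar2R_key R (1 - ∑ l, x l) (x j) (-(z j)) hR hS.le (hx j).le
      simpa using this
    rw [hsplit]
    rw [hcard] at hlow
    have hxj := (hx j).le
    nlinarith [hlow, htail]
  · have h0 : ∑ j : Fin n, ∑ k : Fin n,
        (x k * astar2R R (z k - z j) - x j * astar2R R (z j - z k)) = 0 := by
      simp only [Finset.sum_sub_distrib]
      rw [Finset.sum_comm]
      exact sub_self _
    have hsum : ∑ j, dzHam2R n R x z j ≤ 2 * R * (n : ℝ) * (1 - ∑ l, x l) := by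
      unfold dzHam2R
      have hB : ∑ j : Fin n, (1 - ∑ l, x l) * astar2R R (-(z j))
          ≤ (n : ℝ) * ((1 - ∑ l, x l) * (2 * R)) := by
        calc ∑ j : Fin n, (1 - ∑ l, x l) * astar2R R (-(z j))
            ≤ ∑ _j : Fin n, (1 - ∑ l, x l) * (2 * R) :=
              Finset.sum_le_sum (fun j _ =>
                mul_le_mul_of_nonneg_left (astar2R_le R _) hS.le)
          _ = (n : ℝ) * ((1 - ∑ l, x l) * (2 * R)) := by
              simp [Finset.sum_const, nsmul_eq_mul]
      have hC : 0 ≤ ∑ j : Fin n, x j * astar2R R (z j) :=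
        Finset.sum_nonneg (fun j _ =>
          mul_nonneg (hx j).le (astar2R_nonneg R _ hR))
      have : ∑ j : Fin n,
          ((∑ k, (x k * astar2R R (z k - z j) - x j * astar2R R (z j - z k)))
            + (1 - ∑ l, x l) * astar2R R (-(z j)) - x j * astar2R R (z j))
          = (∑ j : Fin n, ∑ k : Fin n,
              (x k * astar2R R (z k - z j) - x j * astar2R R (z j - z k)))
            + (∑ j : Fin n, (1 - ∑ l, x l) * astar2R R (-(z j)))
            - ∑ j : Fin n, x j * astar2R R (z j) := by
        rw [Finset.sum_sub_distrib, Finset.sum_add_distrib]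
      rw [this, h0, zero_add]
      nlinarith [hB, hC]
    have hn0 : (0 : ℝ) < (n : ℝ) := by exact_mod_cast hn
    have hs : (0 : ℝ) < Real.sqrt n := Real.sqrt_pos.mpr hn0
    rw [← Finset.sum_mul]
    have e1 : (∑ j, dzHam2R n R x z j) * (-(1 / Real.sqrt n))
        = (-(∑ j, dzHam2R n R x z j)) / Real.sqrt n := by ring
    have e2 : -(2 * R * (n : ℝ)) * ((1 - ∑ l, x l) / Real.sqrt n)
        = (-(2 * R * (n : ℝ) * (1 - ∑ l, x l))) / Real.sqrt n := by ring
    rw [e1, e2]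
    exact (div_le_div_iff_of_pos_right hs).mpr (by linarith)

end
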